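/- Let 1 ≤ p ≤ n, X ∈ St(n,p), and C ⊆ [p] be nonempty, and set T = {ξ ∈ ℝ^{n×|C|} : (X_C)ᵀξ + ξᵀX_C = 0 and (X_{[p]∖C})ᵀξ = 0}, the tangent space to the submanifold block M_{X_{[p]∖C}} at X_C. Then the linear map Π(ξ) = X_C·skew((X_C)ᵀξ) + (I − XXᵀ)ξ, where skew(A) = (A−Aᵀ)/2, is the orthogonal projection of ℝ^{n×|C|} onto T with respect to the Frobenius inner product: for every ξ ∈ ℝ^{n×|C|}, Π(ξ) ∈ T and ⟨ξ − Π(ξ), η⟩ = 0 for every η ∈ T. -/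

import Mathlib

/-!
Common definitions for the formalization of results from
"Nonsmooth Optimization over the Stiefel Manifold via a Randomized
Submanifold Subgradient Method" (RSSM).
-/

open Matrix Finset

noncomputable section

namespace RSSM

variable {n p ℓ : ℕ}

/-- Real `n × p` matrices. -/
abbrev Mat (n p : ℕ) := Matrix (Fin n) (Fin p) ℝ

/-- Frobenius inner product `⟨ξ,η⟩ = tr(ξᵀ η)`. -/
def fip (ξ η : Mat n p) : ℝ := (ξᵀ * η).trace

/-- Frobenius norm. -/
def fnorm (ξ : Mat n p) : ℝ := Real.sqrt (fip ξ ξ)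

/-- The Stiefel manifold `St(n,p)`. -/
def Stiefel (n p : ℕ) : Set (Mat n p) := {X | Xᵀ * X = 1}

/-- Column-selection matrix `I_C`. -/
def sel (C : Finset (Fin p)) : Matrix (Fin p) (Fin C.card) ℝ :=
  Matrix.of fun s t => if s = C.orderEmbOfFin rfl t then (1 : ℝ) else 0

/-- Skew-symmetric part. -/
def skewPart {m : ℕ} (A : Matrix (Fin m) (Fin m) ℝ) : Matrix (Fin m) (Fin m) ℝ :=
  (1 / 2 : ℝ) • (A - Aᵀ)

/-- Symmetric part. -/
def symPart {m : ℕ} (A : Matrix (Fin m) (Fin m) ℝ) : Matrix (Fin m) (Fin m) ℝ :=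
  (1 / 2 : ℝ) • (A + Aᵀ)

/-- The positive semidefinite square root, as `Matrix.PosSemidef.sqrt` was defined in the
older Mathlib (removed since). -/
def psdSqrt {m : ℕ} {S : Matrix (Fin m) (Fin m) ℝ} (hA : S.PosSemidef) :
    Matrix (Fin m) (Fin m) ℝ :=
  hA.1.eigenvectorUnitary.1 * diagonal ((↑) ∘ (√·) ∘ hA.1.eigenvalues) *
    (star hA.1.eigenvectorUnitary : Matrix (Fin m) (Fin m) ℝ)

open Classical in
/-- Inverse of the positive-semidefinite square root (junk value `0` otherwise). -/
def invSqrt {m : ℕ} (S : Matrix (Fin m) (Fin m) ℝ) : Matrix (Fin m) (Fin m) ℝ :=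
  if h : S.PosSemidef then (psdSqrt h)⁻¹ else 0

/-- Orthogonal projection onto the tangent space `T_X St(n,p)`. -/
def ptan (X ξ : Mat n p) : Mat n p := ξ - X * symPart (Xᵀ * ξ)

/-- Orthogonal projection `Π` onto the tangent space of the submanifold block at `X_D`. -/
def pblk (X : Mat n p) (D : Finset (Fin p)) (η : Matrix (Fin n) (Fin D.card) ℝ) :
    Matrix (Fin n) (Fin D.card) ℝ :=
  (X * sel D) * skewPart ((X * sel D)ᵀ * η) + (1 - X * Xᵀ) * η

/-- The averaging operator `A_X` (written as an average over ordered pairs of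
distinct indices, which equals the average over unordered pairs since each
unordered pair is counted twice). -/
def avg (C : Fin ℓ → Finset (Fin p)) (X ξ : Mat n p) : Mat n p :=
  ((ℓ : ℝ) * ((ℓ : ℝ) - 1))⁻¹ •
    ∑ q ∈ Finset.univ.offDiag,
      ((1 : Matrix (Fin n) (Fin n) ℝ)
          - (X * sel ((C q.1 ∪ C q.2)ᶜ)) * (X * sel ((C q.1 ∪ C q.2)ᶜ))ᵀ)
        * (ξ * sel (C q.1 ∪ C q.2)) * (sel (C q.1 ∪ C q.2))ᵀ

/-- The averaging operator `A_X` as a linear endomorphism. -/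
def avgL (C : Fin ℓ → Finset (Fin p)) (X : Mat n p) : Mat n p →ₗ[ℝ] Mat n p where
  toFun := avg C X
  map_add' := by
    intro ξ η
    simp [avg, Matrix.add_mul, Matrix.mul_add, Finset.sum_add_distrib, smul_add]
  map_smul' := by
    intro c ξ
    simp only [avg, RingHom.id_apply, Matrix.smul_mul, Matrix.mul_smul, ← Finset.smul_sum]
    rw [smul_comm]

/-- `C(ℓ,2) = ℓ(ℓ-1)/2`. -/
def choose2 (ℓ : ℕ) : ℝ := (ℓ : ℝ) * ((ℓ : ℝ) - 1) / 2

/-- Block Hadamard product `A ⊡ M` with respect to the partition `C`. -/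
def bhad (C : Fin ℓ → Finset (Fin p)) (A : Matrix (Fin ℓ) (Fin ℓ) ℝ)
    (M : Matrix (Fin p) (Fin p) ℝ) : Matrix (Fin p) (Fin p) ℝ :=
  Matrix.of fun s t => (∑ i, ∑ j, if s ∈ C i ∧ t ∈ C j then A i j else 0) * M s t

/-- `Q' = J - ((ℓ-2)/(ℓ-1)) I`. -/
def Qmat (ℓ : ℕ) : Matrix (Fin ℓ) (Fin ℓ) ℝ :=
  Matrix.of fun i j => 1 - (if i = j then ((ℓ : ℝ) - 2) / ((ℓ : ℝ) - 1) else 0)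

/-- The all-ones `ℓ × ℓ` matrix `J`. -/
def Jmat (ℓ : ℕ) : Matrix (Fin ℓ) (Fin ℓ) ℝ := Matrix.of fun _ _ => 1

/-- The operator `B_Z` (the inverse of the averaging operator `A_Z`). -/
def Bop (C : Fin ℓ → Finset (Fin p)) (Z ξ : Mat n p) : Mat n p :=
  Z * (choose2 ℓ • bhad C (Qmat ℓ) (Zᵀ * ξ)) + ((ℓ : ℝ) / 2) • ((1 - Z * Zᵀ) * ξ)

/-- `‖ξ‖²_{A_Z^{-1}} = ⟨B_Z(ξ), ξ⟩`. -/
def anorm2 (C : Fin ℓ → Finset (Fin p)) (Z ξ : Mat n p) : ℝ := fip (Bop C Z ξ) ξ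

/-- The RSSM update `U(X, v, γ, {i,j})`: it agrees with `X` on all columns outside
`C_i ∪ C_j` and performs a retracted partial Riemannian subgradient step there. -/
def update (C : Fin ℓ → Finset (Fin p)) (X v : Mat n p) (γ : ℝ) (i j : Fin ℓ) : Mat n p :=
  X - (X * sel (C i ∪ C j)) * (sel (C i ∪ C j))ᵀ
    + ((X * sel (C i ∪ C j) - γ • pblk X (C i ∪ C j) (v * sel (C i ∪ C j)))
        * invSqrt ((X * sel (C i ∪ C j) - γ • pblk X (C i ∪ C j) (v * sel (C i ∪ C j)))ᵀ
            * (X * sel (C i ∪ C j) - γ • pblk X (C i ∪ C j) (v * sel (C i ∪ C j)))))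
      * (sel (C i ∪ C j))ᵀ

/-- The subdifferential of a `τ`-weakly convex function relative to `Ω`. -/
def subdiff (Ω : Set (Mat n p)) (τ : ℝ) (f : Mat n p → ℝ) (X : Mat n p) :
    Set (Mat n p) :=
  {v | ∀ Y ∈ Ω, f Y ≥ f X + fip v (Y - X) - τ / 2 * (fnorm (Y - X)) ^ 2}

/-- `C` is a partition of `[p]` into nonempty blocks. -/
def IsPartition (C : Fin ℓ → Finset (Fin p)) : Prop :=
  (∀ i, (C i).Nonempty) ∧ (∀ i j, i ≠ j → Disjoint (C i) (C j)) ∧ (∀ s, ∃ i, s ∈ C i)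

/-- The weakly convex Lipschitz setting. -/
structure Setting (n p : ℕ) (f : Mat n p → ℝ) (τ L : ℝ) (Ω : Set (Mat n p)) : Prop where
  tau_nonneg : 0 ≤ τ
  L_pos : 0 < L
  isOpen : IsOpen Ω
  bounded : ∃ R : ℝ, ∀ Y ∈ Ω, fnorm Y ≤ R
  convex : Convex ℝ Ω
  stiefel_subset : Stiefel n p ⊆ Ω
  lipschitz : ∀ X ∈ Ω, ∀ Y ∈ Ω, |f X - f Y| ≤ L * fnorm (X - Y)
  weaklyConvex : ConvexOn ℝ Ω (fun Z => f Z + τ / 2 * (fnorm Z) ^ 2)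

/-- The adaptive proximal objective `Y ↦ f(Y) + (1/(2λ))‖Y-X‖²_{A_X^{-1}}`. -/
def pobj (C : Fin ℓ → Finset (Fin p)) (f : Mat n p → ℝ) (lam : ℝ) (X Y : Mat n p) : ℝ :=
  f Y + 1 / (2 * lam) * anorm2 C X (Y - X)

/-- The adaptive Moreau envelope `f_λ`. -/
def moreau (C : Fin ℓ → Finset (Fin p)) (f : Mat n p → ℝ) (lam : ℝ) (X : Mat n p) : ℝ :=
  sInf ((fun Y => pobj C f lam X Y) '' Stiefel n p)

open Classical in
/-- The adaptive proximal point `Z_X` (defined via choice; under the standing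
hypotheses the minimizer over the Stiefel manifold exists and is unique). -/
def proxPt (C : Fin ℓ → Finset (Fin p)) (f : Mat n p → ℝ) (lam : ℝ) (X : Mat n p) :
    Mat n p :=
  if h : ∃ Z ∈ Stiefel n p, ∀ Y ∈ Stiefel n p, pobj C f lam X Z ≤ pobj C f lam X Y
  then h.choose else X

/-- The surrogate stationarity measure `Θ_λ(X) = (1/λ)‖Z_X - X‖_{A_X^{-1}}`. -/
def Theta (C : Fin ℓ → Finset (Fin p)) (f : Mat n p → ℝ) (lam : ℝ) (X : Mat n p) : ℝ :=
  1 / lam * Real.sqrt (anorm2 C X (proxPt C f lam X - X))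

/-- The type of unordered pairs of distinct indices in `[ℓ]`. -/
def PairT (ℓ : ℕ) := {s : Sym2 (Fin ℓ) // ¬ s.IsDiag}

instance : Fintype (PairT ℓ) := by unfold PairT; infer_instance
instance : DecidableEq (PairT ℓ) := by unfold PairT; infer_instance
instance : MeasurableSpace (PairT ℓ) := ⊤

/-- The RSSM update as a function of an unordered pair of indices. -/
def updateS (C : Fin ℓ → Finset (Fin p)) (X v : Mat n p) (γ : ℝ) (s : Sym2 (Fin ℓ)) :
    Mat n p :=
  Sym2.lift ⟨fun i j => update C X v γ i j, by
    intro i j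
    show update C X v γ i j = update C X v γ j i
    unfold update pblk
    rw [Finset.union_comm (C i) (C j)]⟩ s

/-- The RSSM iterates driven by a sequence `ω` of unordered pairs. -/
def seqIter (C : Fin ℓ → Finset (Fin p)) (V : Mat n p → Mat n p) (X0 : Mat n p)
    (γ : ℕ → ℝ) (ω : ℕ → PairT ℓ) : ℕ → Mat n p
  | 0 => X0
  | k + 1 => updateS C (seqIter C V X0 γ ω k) (V (seqIter C V X0 γ ω k)) (γ k) (ω k).1

/-- The RSSM iterate after `k` steps driven by a finite prefix of unordered pairs. -/
def preIter (C : Fin ℓ → Finset (Fin p)) (V : Mat n p → Mat n p) (X0 : Mat n p)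
    (γ : ℕ → ℝ) : (k : ℕ) → (Fin k → PairT ℓ) → Mat n p
  | 0, _ => X0
  | k + 1, g =>
      updateS C (preIter C V X0 γ k (fun m => g m.castSucc))
        (V (preIter C V X0 γ k (fun m => g m.castSucc))) (γ k) (g (Fin.last k)).1

/-- `E[h(X^k)]`, the average over all prefixes of unordered pairs of length `k`. -/
def Eavg (C : Fin ℓ → Finset (Fin p)) (V : Mat n p → Mat n p) (X0 : Mat n p)
    (γ : ℕ → ℝ) (k : ℕ) (h : Mat n p → ℝ) : ℝ :=
  (1 / (Fintype.card (PairT ℓ) : ℝ)) ^ k * ∑ g : Fin k → PairT ℓ, h (preIter C V X0 γ k g)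

lemma selT_mul_sel (C : Finset (Fin p)) : (sel C)ᵀ * sel C = 1 := by
  ext t t'
  simp only [Matrix.mul_apply, Matrix.transpose_apply, sel, Matrix.of_apply, Matrix.one_apply,
    ite_mul, one_mul, zero_mul]
  rw [Finset.sum_ite_eq' Finset.univ (C.orderEmbOfFin rfl t)]
  simp [(C.orderEmbOfFin rfl).injective.eq_iff, eq_comm]

lemma selcT_mul_sel (C : Finset (Fin p)) : (sel Cᶜ)ᵀ * sel C = 0 := by
  ext t t'
  simp only [Matrix.mul_apply, Matrix.transpose_apply, sel, Matrix.of_apply, Matrix.zero_apply,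
    ite_mul, one_mul, zero_mul]
  rw [Finset.sum_ite_eq' Finset.univ (Cᶜ.orderEmbOfFin rfl t)]
  have h1 : Cᶜ.orderEmbOfFin rfl t ∈ Cᶜ := Finset.orderEmbOfFin_mem _ rfl t
  have h2 : C.orderEmbOfFin rfl t' ∈ C := Finset.orderEmbOfFin_mem _ rfl t'
  have : ¬ Cᶜ.orderEmbOfFin rfl t = C.orderEmbOfFin rfl t' := by
    intro h; rw [h] at h1; exact (Finset.mem_compl.mp h1) h2
  simp [this]

lemma sel_mul_selT_entry (C : Finset (Fin p)) (s s' : Fin p) :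
    (sel C * (sel C)ᵀ) s s' = if s = s' ∧ s ∈ C then 1 else 0 := by
  simp only [Matrix.mul_apply, Matrix.transpose_apply, sel, Matrix.of_apply, ite_mul, one_mul,
    zero_mul]
  by_cases hs : s ∈ C
  · obtain ⟨t₀, ht₀⟩ : ∃ t₀, C.orderEmbOfFin rfl t₀ = s := by
      have := (Finset.range_orderEmbOfFin C rfl)
      have : s ∈ Set.range (C.orderEmbOfFin rfl) := by rw [this]; exact hs
      exact this
    rw [Finset.sum_eq_single t₀]
    · simp [ht₀, hs, eq_comm]
    · intro b _ hb
      have : ¬ s = C.orderEmbOfFin rfl b := by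
        intro h; exact hb ((C.orderEmbOfFin rfl).injective (ht₀.trans h).symm)
      simp [this]
    · simp
  · rw [Finset.sum_eq_zero]
    · simp [hs]
    · intro t _
      have : ¬ s = C.orderEmbOfFin rfl t := by
        intro h; exact hs (h ▸ Finset.orderEmbOfFin_mem _ rfl t)
      simp [this]

lemma sel_mul_selT_add (C : Finset (Fin p)) :
    sel C * (sel C)ᵀ + sel Cᶜ * (sel Cᶜ)ᵀ = 1 := by
  ext s s'
  rw [Matrix.add_apply, sel_mul_selT_entry, sel_mul_selT_entry, Matrix.one_apply]
  by_cases h : s = s'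
  · subst h; by_cases hs : s ∈ C <;> simp [hs]
  · simp [h]

/-- the map `Π` is the orthogonal projection onto the tangent
space of the submanifold block at `X_C`. -/
theorem pblk_is_orthogonal_projection
    (n p : ℕ) (hp : 1 ≤ p) (hpn : p ≤ n)
    (X : Mat n p) (hX : X ∈ Stiefel n p)
    (C : Finset (Fin p)) (hC : C.Nonempty)
    (T : Set (Matrix (Fin n) (Fin C.card) ℝ))
    (hT : T = {ξ | (X * sel C)ᵀ * ξ + ξᵀ * (X * sel C) = 0 ∧ (X * sel Cᶜ)ᵀ * ξ = 0})
    (ξ : Matrix (Fin n) (Fin C.card) ℝ) :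
    pblk X C ξ ∈ T ∧ ∀ η ∈ T, fip (ξ - pblk X C ξ) η = 0 := by
  have hXX : Xᵀ * X = 1 := hX
  set A := X * sel C with hA
  set B := X * sel Cᶜ with hB
  have hAA : Aᵀ * A = 1 := by
    rw [hA, Matrix.transpose_mul, Matrix.mul_assoc, ← Matrix.mul_assoc Xᵀ, hXX, Matrix.one_mul,
      selT_mul_sel]
  have hBA : Bᵀ * A = 0 := by
    rw [hA, hB, Matrix.transpose_mul, Matrix.mul_assoc, ← Matrix.mul_assoc Xᵀ, hXX,
      Matrix.one_mul, selcT_mul_sel]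
  have hXXt : X * Xᵀ = A * Aᵀ + B * Bᵀ := by
    have h : A * Aᵀ + B * Bᵀ = X * (sel C * (sel C)ᵀ + sel Cᶜ * (sel Cᶜ)ᵀ) * Xᵀ := by
      simp only [hA, hB, Matrix.transpose_mul, Matrix.mul_add, Matrix.add_mul, Matrix.mul_assoc]
    rw [h, sel_mul_selT_add, Matrix.mul_one]
  have hAXXt : Aᵀ * (X * Xᵀ) = Aᵀ := by
    rw [hA, Matrix.transpose_mul, Matrix.mul_assoc, ← Matrix.mul_assoc Xᵀ, hXX, Matrix.one_mul]
  have hBXXt : Bᵀ * (X * Xᵀ) = Bᵀ := by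
    rw [hB, Matrix.transpose_mul, Matrix.mul_assoc, ← Matrix.mul_assoc Xᵀ, hXX, Matrix.one_mul]
  have hpblk : pblk X C ξ = A * skewPart (Aᵀ * ξ) + (ξ - (X * Xᵀ) * ξ) := by
    rw [pblk, ← hA]
    congr 1
    rw [Matrix.sub_mul, Matrix.one_mul, Matrix.mul_assoc]
  constructor
  · rw [hT]
    constructor
    · have h1 : Aᵀ * pblk X C ξ = skewPart (Aᵀ * ξ) := by
        rw [hpblk, Matrix.mul_add, ← Matrix.mul_assoc, hAA, Matrix.one_mul,
          Matrix.mul_sub, ← Matrix.mul_assoc, hAXXt]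
        simp
      have h2 : (pblk X C ξ)ᵀ * A = (Aᵀ * pblk X C ξ)ᵀ := by
        rw [Matrix.transpose_mul, Matrix.transpose_transpose]
      rw [h1, h2, h1, skewPart]
      ext i j
      simp [Matrix.transpose_apply]
      ring
    · rw [hpblk, Matrix.mul_add, ← Matrix.mul_assoc, hBA, Matrix.zero_mul, zero_add,
        Matrix.mul_sub, ← Matrix.mul_assoc, hBXXt, sub_self]
  · intro η hη
    rw [hT] at hη
    obtain ⟨hη1, hη2⟩ := hη
    have hresid : ξ - pblk X C ξ = A * symPart (Aᵀ * ξ) + B * (Bᵀ * ξ) := by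
      rw [hpblk]
      have h3 : ξ - (A * skewPart (Aᵀ * ξ) + (ξ - (X * Xᵀ) * ξ))
          = (X * Xᵀ) * ξ - A * skewPart (Aᵀ * ξ) := by abel
      have h4 : Aᵀ * ξ = symPart (Aᵀ * ξ) + skewPart (Aᵀ * ξ) := by
        rw [symPart, skewPart]
        ext i j
        simp [Matrix.transpose_apply]
        ring
      rw [h3, hXXt, Matrix.add_mul, Matrix.mul_assoc A Aᵀ ξ, Matrix.mul_assoc B Bᵀ ξ]
      nth_rewrite 1 [h4]
      rw [Matrix.mul_add A]
      abel
    -- key: Aᵀη is skew-symmetric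
    have hskewK : (Aᵀ * η)ᵀ = -(Aᵀ * η) := by
      have := hη1
      rw [add_eq_zero_iff_eq_neg] at this
      rw [Matrix.transpose_mul, Matrix.transpose_transpose, this, neg_neg]
    have hsymS : (symPart (Aᵀ * ξ))ᵀ = symPart (Aᵀ * ξ) := by
      rw [symPart, Matrix.transpose_smul, Matrix.transpose_add, Matrix.transpose_transpose,
        add_comm]
    rw [fip, hresid, Matrix.transpose_add, Matrix.add_mul, Matrix.trace_add]
    have t1 : ((A * symPart (Aᵀ * ξ))ᵀ * η).trace = 0 := by
      have : (A * symPart (Aᵀ * ξ))ᵀ * η = symPart (Aᵀ * ξ) * (Aᵀ * η) := by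
        rw [Matrix.transpose_mul, hsymS, Matrix.mul_assoc]
      rw [this]
      have e2 : (symPart (Aᵀ * ξ) * (Aᵀ * η)).trace
          = -(symPart (Aᵀ * ξ) * (Aᵀ * η)).trace := by
        conv_lhs => rw [← Matrix.trace_transpose, Matrix.transpose_mul, hskewK, hsymS,
          Matrix.neg_mul, Matrix.trace_neg, Matrix.trace_mul_comm]
      linarith [e2]
    have t2 : ((B * (Bᵀ * ξ))ᵀ * η).trace = 0 := by
      have : (B * (Bᵀ * ξ))ᵀ * η = (Bᵀ * ξ)ᵀ * (Bᵀ * η) := by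
        rw [Matrix.transpose_mul, Matrix.mul_assoc]
      rw [this, hη2, Matrix.mul_zero, Matrix.trace_zero]
    rw [t1, t2, add_zero]

end RSSM
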